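/- For distinct propositional atoms p, q, r and any label x, the labelled sequent x:p ⊢_{G} x:q, x:(r⊃((p⤙q)∧r)), where G is the single-node label tree with node x, is derivable in L-LBiI without using the cut rule. -/

import Mathlib

/-- BiInt formulas -/
inductive Form : Type
  | atom : ℕ → Form
  | top  : Form
  | bot  : Form
  | and  : Form → Form → Form
  | or   : Form → Form → Form
  | imp  : Form → Form → Form
  | excl : Form → Form → Form
  deriving DecidableEq

/-- Kripke structures for BiInt -/
structure Kripke where
  W : Type
  le : W → W → Prop
  le_refl : ∀ w, le w w
  le_trans : ∀ u v w, le u v → le v w → le u w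
  nonempty : Nonempty W
  I : W → Set ℕ
  mono : ∀ {w w'}, le w w' → I w ⊆ I w'

/-- truth of a formula at a world -/
def Kripke.force (K : Kripke) : K.W → Form → Prop
  | w, .atom p => p ∈ K.I w
  | _, .top => True
  | _, .bot => False
  | w, .and A B => K.force w A ∧ K.force w B
  | w, .or A B => K.force w A ∨ K.force w B
  | w, .imp A B => ∀ w', K.le w w' → K.force w' A → K.force w' B
  | w, .excl A B => ∃ w', K.le w' w ∧ K.force w' A ∧ ¬ K.force w' B

/-- validity of a sequent -/
def SeqValid (Γ Δ : Multiset Form) : Prop :=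
  ∀ (K : Kripke) (w : K.W), (∀ A ∈ Γ, K.force w A) → ∃ A ∈ Δ, K.force w A

/-- The standard-style sequent calculus LBiI; the boolean parameter tells whether
the cut rule is allowed (`LD false` is cut-free LBiI). -/
inductive LD : Bool → Multiset Form → Multiset Form → Prop
  | hyp (b) (A : Form) (Γ Δ) : LD b (A ::ₘ Γ) (A ::ₘ Δ)
  | cut {Γ Δ} (A : Form) : LD true Γ (A ::ₘ Δ) → LD true (A ::ₘ Γ) Δ → LD true Γ Δ
  | weakL {b Γ Δ} (A : Form) : LD b Γ Δ → LD b (A ::ₘ Γ) Δ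
  | weakR {b Γ Δ} (A : Form) : LD b Γ Δ → LD b Γ (A ::ₘ Δ)
  | contrL {b Γ Δ} {A : Form} : LD b (A ::ₘ A ::ₘ Γ) Δ → LD b (A ::ₘ Γ) Δ
  | contrR {b Γ Δ} {A : Form} : LD b Γ (A ::ₘ A ::ₘ Δ) → LD b Γ (A ::ₘ Δ)
  | topL {b Γ Δ} : LD b Γ Δ → LD b (Form.top ::ₘ Γ) Δ
  | topR (b Γ Δ) : LD b Γ (Form.top ::ₘ Δ)
  | botL (b Γ Δ) : LD b (Form.bot ::ₘ Γ) Δ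
  | botR {b Γ Δ} : LD b Γ Δ → LD b Γ (Form.bot ::ₘ Δ)
  | andL {b Γ Δ A B} : LD b (A ::ₘ B ::ₘ Γ) Δ → LD b (Form.and A B ::ₘ Γ) Δ
  | andR {b Γ Δ A B} : LD b Γ (A ::ₘ Δ) → LD b Γ (B ::ₘ Δ) → LD b Γ (Form.and A B ::ₘ Δ)
  | orL {b Γ Δ A B} : LD b (A ::ₘ Γ) Δ → LD b (B ::ₘ Γ) Δ → LD b (Form.or A B ::ₘ Γ) Δ
  | orR {b Γ Δ A B} : LD b Γ (A ::ₘ B ::ₘ Δ) → LD b Γ (Form.or A B ::ₘ Δ)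
  | impL {b Γ Δ A B} : LD b (Form.imp A B ::ₘ Γ) (A ::ₘ Δ) → LD b (B ::ₘ Γ) Δ →
      LD b (Form.imp A B ::ₘ Γ) Δ
  | impR {b Γ Δ A B} : LD b (A ::ₘ Γ) {B} → LD b Γ (Form.imp A B ::ₘ Δ)
  | exclL {b Γ Δ A B} : LD b {A} (B ::ₘ Δ) → LD b (Form.excl A B ::ₘ Γ) Δ
  | exclR {b Γ Δ A B} : LD b Γ (A ::ₘ Δ) → LD b (B ::ₘ Γ) (Form.excl A B ::ₘ Δ) →
      LD b Γ (Form.excl A B ::ₘ Δ)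

/-- members of nested contexts: formulas or nested sequents -/
inductive NForm : Type
  | fm : Form → NForm
  | seq : List NForm → List NForm → NForm

mutual
  /-- deep equality of nested-context members up to permutation
  (nested contexts are multisets) -/
  inductive NEq : NForm → NForm → Prop
    | fm (A : Form) : NEq (.fm A) (.fm A)
    | seq {Γ Γ' Δ Δ'} : CEq Γ Γ' → CEq Δ Δ' → NEq (.seq Γ Δ) (.seq Γ' Δ')
  /-- equality of nested contexts as multisets -/
  inductive CEq : List NForm → List NForm → Prop
    | nil : CEq [] []
    | cons {a b Γ Γ'} : NEq a b → CEq Γ Γ' → CEq (a :: Γ) (b :: Γ')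
    | swap (a b : NForm) (Γ : List NForm) : CEq (a :: b :: Γ) (b :: a :: Γ)
    | trans {Γ Γ' Γ''} : CEq Γ Γ' → CEq Γ' Γ'' → CEq Γ Γ''
end

/-- The nested sequent calculus N-LBiI; the boolean parameter tells whether
the cut rule is allowed. Nested contexts are lists identified up to `CEq`
(i.e. multisets), so there is an explicit exchange rule. -/
inductive ND : Bool → List NForm → List NForm → Prop
  | exch {b Γ Γ' Δ Δ'} : CEq Γ Γ' → CEq Δ Δ' → ND b Γ Δ → ND b Γ' Δ'
  | hyp (b) (A : Form) (Γ Δ) : ND b (.fm A :: Γ) (.fm A :: Δ)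
  | cut {Γ Δ} (A : Form) : ND true Γ (.fm A :: Δ) → ND true (.fm A :: Γ) Δ → ND true Γ Δ
  | weakL {b Γ Δ} (A : Form) : ND b Γ Δ → ND b (.fm A :: Γ) Δ
  | weakR {b Γ Δ} (A : Form) : ND b Γ Δ → ND b Γ (.fm A :: Δ)
  | contrL {b Γ Δ} {A : Form} : ND b (.fm A :: .fm A :: Γ) Δ → ND b (.fm A :: Γ) Δ
  | contrR {b Γ Δ} {A : Form} : ND b Γ (.fm A :: .fm A :: Δ) → ND b Γ (.fm A :: Δ)
  | topL {b Γ Δ} : ND b Γ Δ → ND b (.fm .top :: Γ) Δ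
  | topR (b Γ Δ) : ND b Γ (.fm .top :: Δ)
  | botL (b Γ Δ) : ND b (.fm .bot :: Γ) Δ
  | botR {b Γ Δ} : ND b Γ Δ → ND b Γ (.fm .bot :: Δ)
  | andL {b Γ Δ A B} : ND b (.fm A :: .fm B :: Γ) Δ → ND b (.fm (.and A B) :: Γ) Δ
  | andR {b Γ Δ A B} : ND b Γ (.fm A :: Δ) → ND b Γ (.fm B :: Δ) → ND b Γ (.fm (.and A B) :: Δ)
  | orL {b Γ Δ A B} : ND b (.fm A :: Γ) Δ → ND b (.fm B :: Γ) Δ → ND b (.fm (.or A B) :: Γ) Δ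
  | orR {b Γ Δ A B} : ND b Γ (.fm A :: .fm B :: Δ) → ND b Γ (.fm (.or A B) :: Δ)
  | impL {b Γ Δ A B} : ND b (.fm (.imp A B) :: Γ) (.fm A :: Δ) → ND b (.fm B :: Γ) Δ →
      ND b (.fm (.imp A B) :: Γ) Δ
  | impR {b Γ Δ A B} : ND b (.fm A :: Γ) [.fm B] → ND b Γ (.fm (.imp A B) :: Δ)
  | exclL {b Γ Δ A B} : ND b [.fm A] (.fm B :: Δ) → ND b (.fm (.excl A B) :: Γ) Δ
  | exclR {b Γ Δ A B} : ND b Γ (.fm A :: Δ) → ND b (.fm B :: Γ) (.fm (.excl A B) :: Δ) →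
      ND b Γ (.fm (.excl A B) :: Δ)
  | nestL {b Γ Δ Γ₀ Δ₀} : ND b Γ₀ (Δ₀ ++ Δ) → ND b (.seq Γ₀ Δ₀ :: Γ) Δ
  | nestR {b Γ Δ Γ₀ Δ₀} : ND b (Γ ++ Γ₀) Δ₀ → ND b Γ (.seq Γ₀ Δ₀ :: Δ)
  | unnestL {b Γ Δ Γ₀ Δ₀} : ND b (.seq Γ₀ Δ₀ :: Γ) Δ → ND b (Γ₀ ++ Γ) (Δ₀ ++ Δ)
  | unnestR {b Γ Δ Γ₀ Δ₀} : ND b Γ (.seq Γ₀ Δ₀ :: Δ) → ND b (Γ₀ ++ Γ) (Δ₀ ++ Δ)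
/-- a finite directed graph with labels (nodes) drawn from ℕ -/
structure LGraph where
  nodes : Finset ℕ
  arcs : Finset (ℕ × ℕ)

/-- renaming of a node in a graph (`G[y/x]`) -/
def LGraph.ren (G : LGraph) (x y : ℕ) : LGraph :=
  ⟨G.nodes.image (fun z => if z = x then y else z),
   G.arcs.image (fun a => ((if a.1 = x then y else a.1), (if a.2 = x then y else a.2)))⟩

/-- labelled contexts: multisets of labelled formulas -/
abbrev LCtx := Multiset (ℕ × Form)

/-- renaming of a label in a labelled context (`Γ[y/x]`) -/
def renC (Γ : LCtx) (x y : ℕ) : LCtx := Γ.map (fun a => ((if a.1 = x then y else a.1), a.2))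

/-- wellformedness of a labelled sequent: all labels are nodes of the graph -/
def Wf (G : LGraph) (Γ Δ : LCtx) : Prop :=
  (∀ a ∈ Γ, a.1 ∈ G.nodes) ∧ (∀ a ∈ Δ, a.1 ∈ G.nodes)

/-- The labelled sequent calculus L-LBiI; the boolean parameter tells whether
the cut rule is allowed. -/
inductive LDeriv : Bool → LGraph → LCtx → LCtx → Prop
  | hyp {G Γ Δ} (b) (x : ℕ) (A : Form) : Wf G Γ Δ → x ∈ G.nodes →
      LDeriv b G ((x, A) ::ₘ Γ) ((x, A) ::ₘ Δ)
  | cut {G Γ Δ} (x : ℕ) (A : Form) : x ∈ G.nodes →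
      LDeriv true G Γ ((x, A) ::ₘ Δ) → LDeriv true G ((x, A) ::ₘ Γ) Δ → LDeriv true G Γ Δ
  | weakL {b G Γ Δ} (x : ℕ) (A : Form) : x ∈ G.nodes → LDeriv b G Γ Δ →
      LDeriv b G ((x, A) ::ₘ Γ) Δ
  | weakR {b G Γ Δ} (x : ℕ) (A : Form) : x ∈ G.nodes → LDeriv b G Γ Δ →
      LDeriv b G Γ ((x, A) ::ₘ Δ)
  | contrL {b G Γ Δ x A} : LDeriv b G ((x, A) ::ₘ (x, A) ::ₘ Γ) Δ → LDeriv b G ((x, A) ::ₘ Γ) Δ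
  | contrR {b G Γ Δ x A} : LDeriv b G Γ ((x, A) ::ₘ (x, A) ::ₘ Δ) → LDeriv b G Γ ((x, A) ::ₘ Δ)
  /-- `nodesplit U`: the conclusion graph is `G₀ ⋈y (y,x) ⋈x G`,
  the premise graph is `G₀ ⋈y G[y/x]`, with proviso `↓G x` -/
  | nodesplitU {b Γ Δ} (G₀ G : LGraph) (x y : ℕ) :
      y ∈ G₀.nodes → x ∈ G.nodes → G₀.nodes ∩ G.nodes = ∅ →
      (∀ z, (z, x) ∉ G.arcs) →
      LDeriv b ⟨G₀.nodes ∪ (G.ren x y).nodes, G₀.arcs ∪ (G.ren x y).arcs⟩ Γ Δ →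
      LDeriv b ⟨G₀.nodes ∪ G.nodes, insert (y, x) (G₀.arcs ∪ G.arcs)⟩ Γ Δ
  /-- `nodesplit D`: the conclusion graph is `G ⋈x (x,y) ⋈y G₀`,
  the premise graph is `G[y/x] ⋈y G₀`, with proviso `↑G x` -/
  | nodesplitD {b Γ Δ} (G G₀ : LGraph) (x y : ℕ) :
      x ∈ G.nodes → y ∈ G₀.nodes → G.nodes ∩ G₀.nodes = ∅ →
      (∀ z, (x, z) ∉ G.arcs) →
      LDeriv b ⟨(G.ren x y).nodes ∪ G₀.nodes, (G.ren x y).arcs ∪ G₀.arcs⟩ Γ Δ →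
      LDeriv b ⟨G.nodes ∪ G₀.nodes, insert (x, y) (G.arcs ∪ G₀.arcs)⟩ Γ Δ
  /-- `nodemerge D`: the premise graph is `G₀ ⋈y (y,x) ⋈x G`,
  the conclusion graph is `G₀[x/y] ⋈x G` and `y` is renamed to `x` in the contexts -/
  | nodemergeD {b Γ Δ} (G₀ G : LGraph) (x y : ℕ) :
      y ∈ G₀.nodes → x ∈ G.nodes → G₀.nodes ∩ G.nodes = ∅ →
      LDeriv b ⟨G₀.nodes ∪ G.nodes, insert (y, x) (G₀.arcs ∪ G.arcs)⟩ Γ Δ →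
      LDeriv b ⟨(G₀.ren y x).nodes ∪ G.nodes, (G₀.ren y x).arcs ∪ G.arcs⟩
        (renC Γ y x) (renC Δ y x)
  /-- `nodemerge U`: the premise graph is `G ⋈x (x,y) ⋈y G₀`,
  the conclusion graph is `G ⋈x G₀[x/y]` and `y` is renamed to `x` in the contexts -/
  | nodemergeU {b Γ Δ} (G G₀ : LGraph) (x y : ℕ) :
      x ∈ G.nodes → y ∈ G₀.nodes → G.nodes ∩ G₀.nodes = ∅ →
      LDeriv b ⟨G.nodes ∪ G₀.nodes, insert (x, y) (G.arcs ∪ G₀.arcs)⟩ Γ Δ →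
      LDeriv b ⟨G.nodes ∪ (G₀.ren y x).nodes, G.arcs ∪ (G₀.ren y x).arcs⟩
        (renC Γ y x) (renC Δ y x)
  | monotL {b G Γ Δ A} (x y : ℕ) : (x, y) ∈ G.arcs →
      LDeriv b G ((x, A) ::ₘ (y, A) ::ₘ Γ) Δ → LDeriv b G ((x, A) ::ₘ Γ) Δ
  | monotR {b G Γ Δ A} (x y : ℕ) : (y, x) ∈ G.arcs →
      LDeriv b G Γ ((y, A) ::ₘ (x, A) ::ₘ Δ) → LDeriv b G Γ ((x, A) ::ₘ Δ)
  | topL {b G Γ Δ x} : x ∈ G.nodes → LDeriv b G Γ Δ → LDeriv b G ((x, Form.top) ::ₘ Γ) Δ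
  | topR {G Γ Δ} (b) (x : ℕ) : Wf G Γ Δ → x ∈ G.nodes → LDeriv b G Γ ((x, Form.top) ::ₘ Δ)
  | botL {G Γ Δ} (b) (x : ℕ) : Wf G Γ Δ → x ∈ G.nodes → LDeriv b G ((x, Form.bot) ::ₘ Γ) Δ
  | botR {b G Γ Δ x} : x ∈ G.nodes → LDeriv b G Γ Δ → LDeriv b G Γ ((x, Form.bot) ::ₘ Δ)
  | andL {b G Γ Δ x A B} : LDeriv b G ((x, A) ::ₘ (x, B) ::ₘ Γ) Δ →
      LDeriv b G ((x, Form.and A B) ::ₘ Γ) Δ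
  | andR {b G Γ Δ x A B} : LDeriv b G Γ ((x, A) ::ₘ Δ) → LDeriv b G Γ ((x, B) ::ₘ Δ) →
      LDeriv b G Γ ((x, Form.and A B) ::ₘ Δ)
  | orL {b G Γ Δ x A B} : LDeriv b G ((x, A) ::ₘ Γ) Δ → LDeriv b G ((x, B) ::ₘ Γ) Δ →
      LDeriv b G ((x, Form.or A B) ::ₘ Γ) Δ
  | orR {b G Γ Δ x A B} : LDeriv b G Γ ((x, A) ::ₘ (x, B) ::ₘ Δ) →
      LDeriv b G Γ ((x, Form.or A B) ::ₘ Δ)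
  | impL {b G Γ Δ x A B} : LDeriv b G ((x, Form.imp A B) ::ₘ Γ) ((x, A) ::ₘ Δ) →
      LDeriv b G ((x, B) ::ₘ Γ) Δ → LDeriv b G ((x, Form.imp A B) ::ₘ Γ) Δ
  /-- `⊃R`: the premise graph is `G ⋈x (x,y)` with `y` fresh -/
  | impR {b G Γ Δ A B} (x y : ℕ) : x ∈ G.nodes → y ∉ G.nodes →
      LDeriv b ⟨insert y G.nodes, insert (x, y) G.arcs⟩ ((y, A) ::ₘ Γ) ((y, B) ::ₘ Δ) →
      LDeriv b G Γ ((x, Form.imp A B) ::ₘ Δ)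
  /-- `⤙L`: the premise graph is `(y,x) ⋈x G` with `y` fresh -/
  | exclL {b G Γ Δ A B} (x y : ℕ) : x ∈ G.nodes → y ∉ G.nodes →
      LDeriv b ⟨insert y G.nodes, insert (y, x) G.arcs⟩ ((y, A) ::ₘ Γ) ((y, B) ::ₘ Δ) →
      LDeriv b G ((x, Form.excl A B) ::ₘ Γ) Δ
  | exclR {b G Γ Δ x A B} : LDeriv b G Γ ((x, A) ::ₘ Δ) →
      LDeriv b G ((x, B) ::ₘ Γ) ((x, Form.excl A B) ::ₘ Δ) →
      LDeriv b G Γ ((x, Form.excl A B) ::ₘ Δ)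


private lemma perm3 {α : Type*} (a b c : α) : a ::ₘ b ::ₘ ({c} : Multiset α) = c ::ₘ a ::ₘ {b} := by
  rw [show ({c} : Multiset α) = c ::ₘ 0 from rfl, Multiset.cons_swap b c, Multiset.cons_swap a c]
  rfl

/-- the labelled sequent x:p ⊢_G x:q, x:(r⊃((p⤙q)∧r)), with G the
single-node label tree with node x, is derivable in L-LBiI without cut -/
theorem example_sequent_labelled_cutfree (p q r : ℕ)
    (hpq : p ≠ q) (hpr : p ≠ r) (hqr : q ≠ r) (x : ℕ) :
    LDeriv false ⟨{x}, ∅⟩ {(x, Form.atom p)}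
      {(x, Form.atom q), (x, Form.imp (Form.atom r) (Form.and (Form.excl (Form.atom p) (Form.atom q)) (Form.atom r)))} := by
  set E := Form.excl (Form.atom p) (Form.atom q) with hE
  set y := x + 1 with hy
  rw [show ({(x, Form.atom q), (x, Form.imp (Form.atom r) (Form.and E (Form.atom r)))} : LCtx)
      = (x, Form.imp (Form.atom r) (Form.and E (Form.atom r))) ::ₘ {(x, Form.atom q)} from
    Multiset.cons_swap _ _ _]
  apply LDeriv.impR x y (by simp) (by simp [hy])
  -- graph G = ⟨insert y {x}, insert (x,y) ∅⟩, sequent (y,r) ::ₘ {(x,p)} ⊢ (y, E ∧ r) ::ₘ {(x,q)}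
  apply LDeriv.andR
  · -- (y,r), (x,p) ⊢ (y,E), (x,q)
    rw [show ((y, Form.atom r) ::ₘ ({(x, Form.atom p)} : LCtx))
        = (x, Form.atom p) ::ₘ {(y, Form.atom r)} from Multiset.cons_swap _ _ _]
    apply LDeriv.monotL x y (by simp)
    -- (x,p), (y,p), (y,r) ⊢ (y,E), (x,q)
    apply LDeriv.monotR y x (A := E) (by simp)
    -- ⊢ (x,E), (y,E), (x,q)
    apply LDeriv.exclR
    · -- ⊢ (x,p), (y,E), (x,q)
      exact LDeriv.hyp false x (Form.atom p) (by constructor <;> simp +contextual) (by simp)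
    · -- (x,q), (x,p), (y,p), (y,r) ⊢ (x,E), (y,E), (x,q)
      rw [perm3 (x, E) (y, E) (x, Form.atom q)]
      exact LDeriv.hyp false x (Form.atom q) (by constructor <;> simp +contextual) (by simp)
  · -- (y,r), (x,p) ⊢ (y,r), (x,q)
    exact LDeriv.hyp false y (Form.atom r) (by constructor <;> simp +contextual) (by simp)
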